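/- In the encoding ⦃·⦄U of Horn PCL theories (which maps α → a to {!α → Ua, Rα → Ra}, maps α ↠ a to {Rα ↠ Ua}, and adds !a → Ua and Ua → Ra for every atom a of the theory), for the theory Δ₃ = {a → b, b ↠ a}: ⦃Δ₃⦄U ⊢ Ua, ⦃Δ₃⦄U ⊬ Ub, and ⦃Δ₃⦄U, !a ⊢ Ub. -/
import Mathlib


/-- Formulae of Propositional Contract Logic over atoms `A`. -/
inductive PCLForm (A : Type) : Type
  | atom : A → PCLForm A
  | top  : PCLForm A
  | and  : PCLForm A → PCLForm A → PCLForm A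
  | imp  : PCLForm A → PCLForm A → PCLForm A
  | cimp : PCLForm A → PCLForm A → PCLForm A

/-- Natural deduction for PCL: intuitionistic rules plus (↠I1), (↠I2), (↠E). -/
inductive PCLProves {A : Type} : Set (PCLForm A) → PCLForm A → Prop
  | ax {Δ p} : p ∈ Δ → PCLProves Δ p
  | topI {Δ} : PCLProves Δ .top
  | andI {Δ p q} : PCLProves Δ p → PCLProves Δ q → PCLProves Δ (.and p q)
  | andE1 {Δ p q} : PCLProves Δ (.and p q) → PCLProves Δ p
  | andE2 {Δ p q} : PCLProves Δ (.and p q) → PCLProves Δ q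
  | impI {Δ p q} : PCLProves (insert p Δ) q → PCLProves Δ (.imp p q)
  | impE {Δ p q} : PCLProves Δ (.imp p q) → PCLProves Δ p → PCLProves Δ q
  | cimpI1 {Δ p q} : PCLProves Δ q → PCLProves Δ (.cimp p q)
  | cimpI2 {Δ p q p' q'} : PCLProves Δ (.cimp p' q') → PCLProves (insert p Δ) p' →
      PCLProves (insert q' Δ) (.cimp p q) → PCLProves Δ (.cimp p q)
  | cimpE {Δ p q} : PCLProves Δ (.cimp p q) → PCLProves (insert q Δ) p → PCLProves Δ q

/-- Tags for the copies of the atoms used by the encoding ⦃·⦄U: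
`bang a` (!a) means "a happened in the past", `U a` means "a is urgent",
`R a` means "a is reachable". -/
inductive TAtom : Type
  | bang : ℕ → TAtom
  | U : ℕ → TAtom
  | R : ℕ → TAtom
deriving DecidableEq

/-- The encoding ⦃Δ₃⦄U of the Horn PCL theory Δ₃ = {a → b, b ↠ a}
(a = 0, b = 1): the clause a → b contributes !a → Ub and Ra → Rb; the clause
b ↠ a contributes Rb ↠ Ua; and each atom x ∈ {a, b} contributes
!x → Ux and Ux → Rx. -/
def encDelta3 : Set (PCLForm TAtom) :=
  { .imp (.atom (.bang 0)) (.atom (.U 1)),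
    .imp (.atom (.R 0)) (.atom (.R 1)),
    .cimp (.atom (.R 1)) (.atom (.U 0)),
    .imp (.atom (.bang 0)) (.atom (.U 0)),
    .imp (.atom (.bang 1)) (.atom (.U 1)),
    .imp (.atom (.U 0)) (.atom (.R 0)),
    .imp (.atom (.U 1)) (.atom (.R 1)) }


/-- Boolean semantics collapsing `cimp p q` to `q`; sound for PCL. -/
def ev (v : TAtom → Bool) : PCLForm TAtom → Bool
  | .atom a => v a
  | .top => true
  | .and p q => ev v p && ev v q
  | .imp p q => !ev v p || ev v q
  | .cimp _ q => ev v q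

theorem ev_sound {Δ : Set (PCLForm TAtom)} {p} (h : PCLProves Δ p) :
    ∀ v, (∀ q ∈ Δ, ev v q = true) → ev v p = true := by
  induction h with
  | ax hm => intro v hΔ; exact hΔ _ hm
  | topI => intro v _; rfl
  | andI _ _ ih1 ih2 => intro v hΔ; simp [ev, ih1 v hΔ, ih2 v hΔ]
  | andE1 _ ih => intro v hΔ; have := ih v hΔ; simp [ev] at this; exact this.1
  | andE2 _ ih => intro v hΔ; have := ih v hΔ; simp [ev] at this; exact this.2
  | impI _ ih =>
      intro v hΔ
      simp only [ev, Bool.or_eq_true, Bool.not_eq_true']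
      rcases hp : ev v _ with _ | _
      · exact Or.inl rfl
      · refine Or.inr (ih v ?_)
        rintro q (rfl | hq)
        · exact hp
        · exact hΔ _ hq
  | impE _ _ ih1 ih2 =>
      intro v hΔ
      have h1 := ih1 v hΔ; have h2 := ih2 v hΔ
      simp [ev, h2] at h1; exact h1
  | cimpI1 _ ih => intro v hΔ; exact ih v hΔ
  | cimpI2 _ _ _ ih1 _ ih3 =>
      intro v hΔ
      have hq' := ih1 v hΔ
      refine ih3 v ?_
      rintro q (rfl | hq)
      · exact hq'
      · exact hΔ _ hq
  | cimpE _ _ ih1 _ => intro v hΔ; exact ih1 v hΔ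

def cval : TAtom → Bool
  | .bang _ => false
  | .U 0 => true
  | .U _ => false
  | .R _ => true

/-- ⦃Δ₃⦄U ⊢ Ua, ⦃Δ₃⦄U ⊬ Ub, and ⦃Δ₃⦄U, !a ⊢ Ub. -/
theorem encDelta3_urgent :
    PCLProves encDelta3 (.atom (.U 0))
    ∧ ¬ PCLProves encDelta3 (.atom (.U 1))
    ∧ PCLProves (insert (.atom (.bang 0)) encDelta3) (.atom (.U 1)) := by
  refine ⟨?_, ?_, ?_⟩
  · -- ⊢ Ua via (↠E) on Rb ↠ Ua
    refine PCLProves.cimpE (p := .atom (.R 1)) (PCLProves.ax (by simp [encDelta3])) ?_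
    refine PCLProves.impE (p := .atom (.R 0)) (PCLProves.ax (by simp [encDelta3])) ?_
    refine PCLProves.impE (p := .atom (.U 0)) (PCLProves.ax (by simp [encDelta3])) ?_
    exact PCLProves.ax (by simp)
  · intro h
    have := ev_sound h cval (by
      rintro q hq
      simp only [encDelta3, Set.mem_insert_iff, Set.mem_singleton_iff] at hq
      rcases hq with rfl | rfl | rfl | rfl | rfl | rfl | rfl <;> rfl)
    simp [ev, cval] at this
  · exact PCLProves.impE (p := .atom (.bang 0))
      (PCLProves.ax (by simp [encDelta3])) (PCLProves.ax (by simp))
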